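/- arXiv:1610.02107 — 3 statements merged into one kernel-verified Lean document; each statement's English description precedes it below -/
import Mathlib

section
/- Two signed graphs on the same underlying graph are switching equivalent if and only if they have the same collection of positive circles. -/
set_option linter.unusedSectionVars false


open SimpleGraph Finset

variable {V : Type*} [DecidableEq V]

/-- The sign (product of edge signs) of a finite set of edges. -/
def esign (σ : Sym2 V → ℤˣ) (s : Finset (Sym2 V)) : ℤˣ := ∏ e ∈ s, σ e

/-- The sign of a walk: the product of the signs of its edges. -/
def wsign (σ : Sym2 V → ℤˣ) {G : SimpleGraph V} {u v : V} (w : G.Walk u v) : ℤˣ :=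
  (w.edges.map σ).prod

/-- `s` is the edge set of a circle (cycle) of `G`. -/
def IsCircleOf (G : SimpleGraph V) (s : Finset (Sym2 V)) : Prop :=
  ∃ (a : V) (w : G.Walk a a), w.IsCycle ∧ w.edges.toFinset = s

/-- The signature obtained from `σ` by switching with `ζ`. -/
def switchSign (σ : Sym2 V → ℤˣ) (ζ : V → ℤˣ) : Sym2 V → ℤˣ :=
  fun e => Sym2.lift ⟨fun a b => ζ a * σ s(a, b) * ζ b, by
    intro a b
    simp only []
    rw [Sym2.eq_swap]
    simp [mul_comm, mul_assoc, mul_left_comm]⟩ e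

/-- `b` is a balancing edge: one can switch so that `b` is the unique negative edge. -/
def IsBalancingEdge (G : SimpleGraph V) (σ : Sym2 V → ℤˣ) (b : Sym2 V) : Prop :=
  b ∈ G.edgeSet ∧ ∃ ζ : V → ℤˣ, ∀ f ∈ G.edgeSet, (switchSign σ ζ f = -1 ↔ f = b)

/-- `F` is the edge set of a bridge of the circle `w` in `G`: either a single
chord of `w`, or the edge set attached to a connected component of `G` minus
the vertices of `w`. -/
def IsBridgeOf {a : V} (G : SimpleGraph V) (w : G.Walk a a) (F : Set (Sym2 V)) : Prop :=
  (∃ x y : V, x ≠ y ∧ x ∈ w.support ∧ y ∈ w.support ∧ G.Adj x y ∧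
      s(x, y) ∉ w.edges ∧ F = {s(x, y)}) ∨
  (∃ D : Set V, D.Nonempty ∧ (∀ x ∈ D, x ∉ w.support) ∧ (G.induce D).Connected ∧
      (∀ x ∈ D, ∀ y : V, G.Adj x y → y ∈ D ∨ y ∈ w.support) ∧
      F = {e | e ∈ G.edgeSet ∧ ∃ x ∈ D, x ∈ e})

/-- The vertices of attachment of a bridge with edge set `F`. -/
def attachments {a : V} (G : SimpleGraph V) (w : G.Walk a a) (F : Set (Sym2 V)) : Set V :=
  {x | x ∈ w.support ∧ ∃ e ∈ F, x ∈ e}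

/-- A path through a bridge: a path between two distinct vertices of attachment
all of whose edges lie in the bridge. -/
def IsPathThrough {a : V} (G : SimpleGraph V) (w : G.Walk a a) (F : Set (Sym2 V))
    {x y : V} (Q : G.Walk x y) : Prop :=
  x ≠ y ∧ x ∈ attachments G w F ∧ y ∈ attachments G w F ∧ Q.IsPath ∧
    ∀ e ∈ Q.edges, e ∈ F

/-- `G` is a block: it is connected and has no cutpoint. -/
def IsBlock (G : SimpleGraph V) : Prop :=
  G.Connected ∧ ∀ v : V, ((⊤ : G.Subgraph).deleteVerts {v}).coe.Connected

/-- Two signed graphs on the same underlying graph are switching equivalent. -/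
def SwitchingEquiv (G : SimpleGraph V) (σ₁ σ₂ : Sym2 V → ℤˣ) : Prop :=
  ∃ ζ : V → ℤˣ, ∀ e ∈ G.edgeSet, σ₂ e = switchSign σ₁ ζ e

@[simp] lemma wsign_nil {σ : Sym2 V → ℤˣ} {G : SimpleGraph V} {a : V} :
    wsign σ (Walk.nil : G.Walk a a) = 1 := rfl

@[simp] lemma wsign_cons {σ : Sym2 V → ℤˣ} {G : SimpleGraph V} {a b c : V}
    (h : G.Adj a b) (p : G.Walk b c) :
    wsign σ (Walk.cons h p) = σ s(a, b) * wsign σ p := by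
  simp [wsign]

@[simp] lemma wsign_append {σ : Sym2 V → ℤˣ} {G : SimpleGraph V} {a b c : V}
    (p : G.Walk a b) (q : G.Walk b c) :
    wsign σ (p.append q) = wsign σ p * wsign σ q := by
  simp [wsign, Walk.edges_append]

@[simp] lemma wsign_reverse {σ : Sym2 V → ℤˣ} {G : SimpleGraph V} {a b : V} (p : G.Walk a b) :
    wsign σ p.reverse = wsign σ p := by
  simp [wsign, Walk.edges_reverse, List.map_reverse, List.prod_reverse]

@[simp] lemma wsign_copy {σ : Sym2 V → ℤˣ} {G : SimpleGraph V} {a b a' b' : V}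
    (p : G.Walk a b) (h1 : a = a') (h2 : b = b') :
    wsign σ (p.copy h1 h2) = wsign σ p := by
  subst h1; subst h2; rfl

@[simp] lemma switchSign_mk (σ : Sym2 V → ℤˣ) (ζ : V → ℤˣ) (a b : V) :
    switchSign σ ζ s(a, b) = ζ a * σ s(a, b) * ζ b := rfl

lemma wsign_switch {σ : Sym2 V → ℤˣ} {ζ : V → ℤˣ} {G : SimpleGraph V} {u v : V}
    (p : G.Walk u v) : wsign (switchSign σ ζ) p = ζ u * wsign σ p * ζ v := by
  induction p with
  | nil => simp [Int.units_mul_self, mul_comm]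
  | cons h q ih =>
      rw [wsign_cons, switchSign_mk, ih, wsign_cons]
      have key : ∀ x t y s z : ℤˣ, (x*t*y)*(y*s*z) = x*(t*s)*z := by decide
      exact key _ _ _ _ _

lemma edges_eq_single {G : SimpleGraph V} {a b : V} (hab : a ≠ b) (q : G.Walk b a)
    (hnd : q.support.Nodup) (he : s(a, b) ∈ q.edges) : q.edges = [s(a, b)] := by
  cases q with
  | nil => simp at he
  | cons h' r =>
    rename_i v1
    rw [Walk.edges_cons] at he ⊢
    rw [Walk.support_cons, List.nodup_cons] at hnd
    rcases List.mem_cons.mp he with heq | hmem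
    · -- s(a,b) = s(b,v1)
      have hv : v1 = a := by
        rcases Sym2.eq_iff.mp heq.symm with ⟨h1, h2⟩ | ⟨h1, h2⟩
        · exact absurd h1.symm hab
        · exact h2
      subst hv
      cases r with
      | nil => simp [Sym2.eq_swap]
      | cons h'' r' =>
        exfalso
        rename_i v2
        rw [Walk.support_cons, List.nodup_cons] at hnd
        exact hnd.2.1 (Walk.end_mem_support r')
    · exfalso
      have : b ∈ r.support := Walk.snd_mem_support_of_mem_edges r hmem
      exact hnd.1 this

lemma wsign_eq_of_cycles {G : SimpleGraph V} {σ₁ σ₂ : Sym2 V → ℤˣ}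
    (H : ∀ (a : V) (w : G.Walk a a), w.IsCycle → wsign σ₁ w = wsign σ₂ w) :
    ∀ (n : ℕ) (a : V) (w : G.Walk a a), w.length ≤ n → wsign σ₁ w = wsign σ₂ w := by
  intro n
  induction n using Nat.strong_induction_on with
  | _ n IH =>
  intro a w hlen
  by_cases hcyc : w.IsCycle
  · exact H a w hcyc
  cases w with
  | nil => simp
  | cons h q =>
    rename_i b
    by_cases hnd : q.support.Nodup
    · -- failure is a repeated edge; must be s(a,b) in q.edges
      have hq : q.IsPath := Walk.IsPath.mk' hnd
      have he : s(a, b) ∈ q.edges := by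
        by_contra he
        refine hcyc ?_
        rw [Walk.isCycle_def]
        refine ⟨⟨?_⟩, by simp, by simpa using hnd⟩
        rw [Walk.edges_cons, List.nodup_cons]
        exact ⟨he, hq.edges_nodup⟩
      have hedges : q.edges = [s(a, b)] := edges_eq_single h.ne q hnd he
      simp [wsign, hedges, Int.units_mul_self]
    · -- repeated interior vertex: split into two shorter closed walks
      obtain ⟨c, hdup⟩ := List.exists_duplicate_iff_not_nodup.mpr hnd
      have hcnt : 2 ≤ q.support.count c := List.duplicate_iff_two_le_count.mp hdup
      have hc : c ∈ q.support := hdup.mem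
      have hspec : (q.takeUntil c hc).append (q.dropUntil c hc) = q := q.take_spec hc
      have hcount1 : (q.takeUntil c hc).support.count c = 1 :=
        q.count_support_takeUntil_eq_one hc
      have hsupp : q.support = (q.takeUntil c hc).support ++ (q.dropUntil c hc).support.tail := by
        conv_lhs => rw [← hspec]
        exact Walk.support_append _ _
      have hc2 : c ∈ (q.dropUntil c hc).support.tail := by
        by_contra hc2
        have := hsupp ▸ hcnt
        rw [List.count_append, hcount1, List.count_eq_zero_of_not_mem hc2] at this
        omega
      cases hq2 : q.dropUntil c hc with
      | nil => rw [hq2] at hc2; simp at hc2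
      | cons h2 r =>
        rename_i d
        rw [hq2, Walk.support_cons, List.tail_cons] at hc2
        have hspec2 : (r.takeUntil c hc2).append (r.dropUntil c hc2) = r := r.take_spec hc2
        set q1 := q.takeUntil c hc with hq1def
        set r1 := r.takeUntil c hc2 with hr1def
        set r2 := r.dropUntil c hc2 with hr2def
        -- w = cons h (q1 ++ cons h2 (r1 ++ r2))
        have hw : Walk.cons h q = Walk.cons h (q1.append (Walk.cons h2 (r1.append r2))) := by
          rw [hspec2, ← hq2, hspec]
        -- lengths
        have hlenq : q1.length + (1 + (r1.length + r2.length)) = q.length := by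
          have := congrArg Walk.length hspec
          have h2' := congrArg Walk.length hspec2
          rw [Walk.length_append] at this h2'
          rw [hq2, Walk.length_cons] at this
          omega
        have e1 : wsign σ₁ ((Walk.cons h q1).append r2) = wsign σ₂ ((Walk.cons h q1).append r2) := by
          apply IH (((Walk.cons h q1).append r2).length)
          · rw [Walk.length_append, Walk.length_cons]
            rw [Walk.length_cons] at hlen
            omega
          · rfl
        have e2 : wsign σ₁ (Walk.cons h2 r1) = wsign σ₂ (Walk.cons h2 r1) := by
          apply IH ((Walk.cons h2 r1).length)
          · rw [Walk.length_cons]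
            rw [Walk.length_cons] at hlen
            omega
          · rfl
        rw [hw]
        have expand : ∀ σ : Sym2 V → ℤˣ,
            wsign σ (Walk.cons h (q1.append (Walk.cons h2 (r1.append r2)))) =
            wsign σ ((Walk.cons h q1).append r2) * wsign σ (Walk.cons h2 r1) := by
          intro σ
          simp only [wsign_cons, wsign_append]
          generalize σ s(a,b) = x; generalize wsign σ q1 = y; generalize σ s(c,d) = z
          generalize wsign σ r1 = u; generalize wsign σ r2 = v
          have : ∀ x y z u v : ℤˣ, x * (y * (z * (u * v))) = x * y * v * (z * u) := by decide
          exact this _ _ _ _ _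
        rw [expand σ₁, expand σ₂, e1, e2]

lemma units_eq_of_iff {a b : ℤˣ} (h : a = 1 ↔ b = 1) : a = b := by
  rcases Int.units_eq_one_or a with rfl | rfl <;> rcases Int.units_eq_one_or b with rfl | rfl <;>
    simp_all

lemma esign_eq_wsign {G : SimpleGraph V} {a : V} (σ : Sym2 V → ℤˣ) (w : G.Walk a a)
    (hnd : w.edges.Nodup) : esign σ w.edges.toFinset = wsign σ w := by
  rw [esign, List.prod_toFinset _ hnd]; rfl

theorem switching_equiv_iff_same_positive_circles {V : Type*} [DecidableEq V]
    (G : SimpleGraph V) (σ₁ σ₂ : Sym2 V → ℤˣ) :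
    SwitchingEquiv G σ₁ σ₂ ↔
      ∀ s : Finset (Sym2 V), IsCircleOf G s → (esign σ₁ s = 1 ↔ esign σ₂ s = 1) := by
  constructor
  · rintro ⟨ζ, hζ⟩ s ⟨a, w, hw, rfl⟩
    have hnd := hw.edges_nodup
    have hw2 : wsign σ₂ w = wsign (switchSign σ₁ ζ) w := by
      unfold wsign
      congr 1
      refine List.map_congr_left fun e hee => ?_
      exact hζ e (w.edges_subset_edgeSet hee)
    have hfix : ∀ x y : ℤˣ, x * y * x = y := by decide
    rw [esign_eq_wsign σ₁ w hnd, esign_eq_wsign σ₂ w hnd, hw2, wsign_switch, hfix]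
  · intro hs
    have H : ∀ (a : V) (w : G.Walk a a), w.IsCycle → wsign σ₁ w = wsign σ₂ w := by
      intro a w hw
      have hiff := hs w.edges.toFinset ⟨a, w, hw, rfl⟩
      rw [esign_eq_wsign σ₁ w hw.edges_nodup, esign_eq_wsign σ₂ w hw.edges_nodup] at hiff
      exact units_eq_of_iff hiff
    have Hc : ∀ (a : V) (w : G.Walk a a), wsign σ₁ w = wsign σ₂ w :=
      fun a w => wsign_eq_of_cycles H w.length a w le_rfl
    classical
    have hre : ∀ v : V, G.Reachable (G.connectedComponentMk v).out v := by
      intro v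
      apply SimpleGraph.ConnectedComponent.exact
      exact Quot.out_eq _
    refine ⟨fun v => wsign σ₁ (hre v).some * wsign σ₂ (hre v).some, ?_⟩
    intro e he
    induction e using Sym2.ind with
    | _ x y =>
      have hxy : G.Adj x y := he
      have hcomp : G.connectedComponentMk x = G.connectedComponentMk y :=
        SimpleGraph.ConnectedComponent.connectedComponentMk_eq_of_adj hxy
      have hrep : (G.connectedComponentMk y).out = (G.connectedComponentMk x).out := by
        rw [hcomp]
      have hW := Hc _ ((hre x).some.append (Walk.cons hxy ((hre y).some.reverse.copy rfl hrep)))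
      rw [wsign_append, wsign_append, wsign_cons, wsign_cons, wsign_copy, wsign_copy,
        wsign_reverse, wsign_reverse] at hW
      rw [switchSign_mk]
      have key : ∀ A1 A2 B1 B2 s1 s2 : ℤˣ,
          A1 * (s1 * B1) = A2 * (s2 * B2) → s2 = A1 * A2 * s1 * (B1 * B2) := by decide
      exact key _ _ _ _ _ _ hW
end

section
/- In any signed subdivision of K4, every edge lies in an even number of negative circles and an even number of positive circles. -/
/-!
Let `P_ij` be the branch paths of the subdivision. An interior vertex of a branch path has degree
two, and a circle uses an even number of edges at each vertex, so a circle contains either all or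
none of the edges of each branch path and uses an even number of branch paths at each branch
vertex. The circles of the subdivision are therefore the unions of branch paths along the circles
of `K₄`, and those through an edge of `P_ab` correspond to the four circles of `K₄` through `ab`:
two triangles and two quadrangles. Every branch path lies in an even number of these four, so the
product of their signs is `1`; hence an even number of them is negative, and, four being even,
an even number is positive.
-/

open SimpleGraph Finset

variable {V : Type*} [DecidableEq V]

/-- `G` is a subdivision of `K₄`: there are four branch vertices joined by six
pairwise internally disjoint paths which use up all edges and vertices of `G`. -/
def IsSubdivisionOfK4 (G : SimpleGraph V) : Prop :=
  ∃ (f : Fin 4 → V), Function.Injective f ∧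
    ∃ P : ∀ i j : Fin 4, i < j → G.Walk (f i) (f j),
      (∀ i j (h : i < j), (P i j h).IsPath ∧ 0 < (P i j h).length) ∧
      (∀ i j (hij : i < j) k l (hkl : k < l), (i, j) ≠ (k, l) →
        ∀ x, x ∈ (P i j hij).support → x ∈ (P k l hkl).support →
          (x = f i ∨ x = f j) ∧ (x = f k ∨ x = f l)) ∧
      (∀ e : Sym2 V, e ∈ G.edgeSet ↔ ∃ i j, ∃ hij : i < j, e ∈ (P i j hij).edges) ∧
      (∀ x : V, ∃ i j, ∃ hij : i < j, x ∈ (P i j hij).support)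

namespace SimpleGraph.Walk

variable {V : Type*} {G : SimpleGraph V}

lemma IsPath.ne_start_of_mem_support_tail {x y v : V} {p : G.Walk x y} (hp : p.IsPath)
    (hv : v ∈ p.support.tail) : v ≠ x := by
  rintro rfl
  have hnodup := hp.support_nodup
  rw [← cons_tail_support] at hnodup
  exact (List.nodup_cons.mp hnodup).1 hv

lemma IsPath.append_of_support_inter {x y z : V} {p : G.Walk x y} {q : G.Walk y z}
    (hp : p.IsPath) (hq : q.IsPath) (h : ∀ v ∈ p.support, v ∈ q.support → v = y) :
    (p.append q).IsPath := by
  refine IsPath.mk' ?_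
  rw [support_append, List.nodup_append]
  refine ⟨hp.support_nodup, hq.support_nodup.tail, fun v hvp v' hvq hvv' => ?_⟩
  subst hvv'
  exact hq.ne_start_of_mem_support_tail hvq (h v hvp (List.mem_of_mem_tail hvq))

lemma IsPath.isCycle_append_of_support_inter {x y : V} {p : G.Walk x y} {q : G.Walk y x}
    (hp : p.IsPath) (hq : q.IsPath) (hlen : 1 < p.length ∨ 1 < q.length)
    (h : ∀ v ∈ p.support, v ∈ q.support → v = x ∨ v = y) : (p.append q).IsCycle :=
  hp.isCycle_append hq (fun v hvp hvq =>
    (h v (List.mem_of_mem_tail hvp) (List.mem_of_mem_tail hvq)).elim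
      (hp.ne_start_of_mem_support_tail hvp) (hq.ne_start_of_mem_support_tail hvq)) hlen

variable [DecidableEq V]

lemma IsPath.card_filter_start_mem_edges {x y : V} {p : G.Walk x y} (hp : p.IsPath)
    (hxy : x ≠ y) : #{g ∈ p.edges.toFinset | x ∈ g} = 1 := by
  rw [card_eq_one]
  refine ⟨s(x, p.snd), ?_⟩
  ext g
  simp only [mem_filter, List.mem_toFinset, mem_singleton]
  constructor
  · rintro ⟨hg, hxg⟩
    obtain ⟨z, rfl⟩ := Sym2.mem_iff_exists.mp hxg
    rw [hp.eq_snd_of_mem_edges hg]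
  · rintro rfl
    exact ⟨mk_start_snd_mem_edges (not_nil_of_ne hxy), Sym2.mem_mk_left _ _⟩

lemma IsTrail.even_card_filter_mem_edges {u : V} {w : G.Walk u u} (hw : w.IsTrail) (x : V) :
    Even #{g ∈ w.edges.toFinset | x ∈ g} := by
  have heven := (hw.even_countP_edges_iff x).mpr fun h => absurd rfl h
  rw [List.countP_eq_length_filter, ← List.toFinset_card_of_nodup (hw.edges_nodup.filter _),
    List.toFinset_filter] at heven
  simpa using heven

lemma IsTrail.mem_edges_iff_of_forall_adj {u v a b : V} {w : G.Walk u u} (hw : w.IsTrail)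
    (hv : ∀ z, G.Adj v z → z = a ∨ z = b) : s(v, a) ∈ w.edges ↔ s(v, b) ∈ w.edges := by
  suffices ∀ a b, (∀ z, G.Adj v z → z = a ∨ z = b) → s(v, a) ∈ w.edges → s(v, b) ∈ w.edges from
    ⟨this a b hv, this b a fun z hz => (hv z hz).symm⟩
  intro a b hv ha
  by_contra hb
  have hsingle : {g ∈ w.edges.toFinset | v ∈ g} = {s(v, a)} := by
    ext g
    simp only [mem_filter, List.mem_toFinset, mem_singleton]
    constructor
    · rintro ⟨hg, hvg⟩
      obtain ⟨z, rfl⟩ := Sym2.mem_iff_exists.mp hvg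
      rcases hv z (w.adj_of_mem_edges hg) with rfl | rfl
      · rfl
      · exact absurd hg hb
    · rintro rfl
      exact ⟨ha, Sym2.mem_mk_left _ _⟩
  have heven := hw.even_card_filter_mem_edges v
  rw [hsingle, card_singleton] at heven
  exact Nat.not_even_one heven

/-- A closed trail uses an even number of edges at every vertex, so at an interior vertex of `p`,
which has no edges besides its two edges on `p`, it uses both or neither. -/
lemma IsTrail.edges_subset_of_interior_adj {u : V} {w : G.Walk u u} (hw : w.IsTrail)
    {x y : V} {p : G.Walk x y} (hp : p.IsPath)
    (hint : ∀ v ∈ p.support, v ≠ x → v ≠ y → ∀ z, G.Adj v z → s(v, z) ∈ p.edges)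
    {g : Sym2 V} (hgp : g ∈ p.edges) (hgw : g ∈ w.edges) : p.edges ⊆ w.edges := by
  induction p generalizing g with
  | nil => simp at hgp
  | @cons x b y hxb q ih =>
    rw [cons_isPath_iff] at hp
    rw [edges_cons, List.mem_cons] at hgp
    by_cases hq : q.Nil
    · rw [edges_cons, edges_eq_nil.mpr hq]
      rcases hgp with rfl | hgq
      · exact List.cons_subset.mpr ⟨hgw, List.nil_subset _⟩
      · simp [edges_eq_nil.mpr hq] at hgq
    have hby : b ≠ y := mt hp.1.nil_iff_eq.mpr hq
    have hbx : b ≠ x := hxb.ne.symm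
    have hsnd : s(b, q.snd) ∈ q.edges := mk_start_snd_mem_edges hq
    have hnbr : ∀ z, G.Adj b z → z = x ∨ z = q.snd := by
      intro z hz
      have hbz := hint b (by simp) hbx hby z hz
      rw [edges_cons, List.mem_cons] at hbz
      rcases hbz with hbz | hbz
      · left
        rcases Sym2.eq_iff.mp hbz with ⟨h, -⟩ | ⟨-, h⟩
        exacts [absurd h hbx, h]
      · exact Or.inr (hp.1.eq_snd_of_mem_edges hbz)
    have hintq : ∀ v ∈ q.support, v ≠ b → v ≠ y → ∀ z, G.Adj v z → s(v, z) ∈ q.edges := by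
      intro v hv hvb hvy z hz
      have hvx : v ≠ x := fun h => hp.2 (h ▸ hv)
      have hvz := hint v (by simp [hv]) hvx hvy z hz
      rw [edges_cons, List.mem_cons] at hvz
      rcases hvz with hvz | hvz
      · rcases Sym2.eq_iff.mp hvz with ⟨h, -⟩ | ⟨h, -⟩
        exacts [absurd h hvx, absurd h hvb]
      · exact hvz
    have hturn := hw.mem_edges_iff_of_forall_adj hnbr
    rw [Sym2.eq_swap] at hturn
    rw [edges_cons, List.cons_subset]
    rcases hgp with rfl | hgq
    · exact ⟨hgw, ih hp.1 hintq hsnd (hturn.mp hgw)⟩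
    · have hsub := ih hp.1 hintq hgq hgw
      exact ⟨hturn.mpr (hsub hsnd), hsub⟩

end SimpleGraph.Walk

/-- The nonempty even subgraphs of `K₄`; by `k4Circles_triangle_or_quadrangle` these are its
seven circles. -/
def k4Circles : Finset (Finset (Sym2 (Fin 4))) :=
  {T ∈ (⊤ : SimpleGraph (Fin 4)).edgeFinset.powerset | T.Nonempty ∧ ∀ i, Even #{t ∈ T | i ∈ t}}

lemma subset_of_mem_k4Circles {T : Finset (Sym2 (Fin 4))} (hT : T ∈ k4Circles) :
    T ⊆ (⊤ : SimpleGraph (Fin 4)).edgeFinset :=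
  mem_powerset.mp (mem_filter.mp hT).1

set_option maxRecDepth 10000 in
lemma k4Circles_triangle_or_quadrangle : ∀ T ∈ k4Circles,
    (∃ i j k : Fin 4, i ≠ j ∧ j ≠ k ∧ i ≠ k ∧ T = {s(i, j), s(j, k), s(i, k)}) ∨
    (∃ i j k l : Fin 4, i ≠ j ∧ j ≠ k ∧ k ≠ l ∧ i ≠ k ∧ j ≠ l ∧ i ≠ l ∧
      T = {s(i, j), s(j, k), s(k, l), s(i, l)}) := by
  decide

lemma even_card_filter_k4Circles : ∀ t₀ ∈ (⊤ : SimpleGraph (Fin 4)).edgeFinset, ∀ t,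
    Even #{T ∈ {T ∈ k4Circles | t₀ ∈ T} | t ∈ T} := by
  decide

lemma prod_prod_eq_one_of_forall_even {α : Type*} [DecidableEq α] {𝒯 : Finset (Finset α)}
    (h : ∀ a, Even #{T ∈ 𝒯 | a ∈ T}) (χ : α → ℤˣ) : ∏ T ∈ 𝒯, ∏ a ∈ T, χ a = 1 := by
  rw [prod_comm' (t' := 𝒯.biUnion id) (s' := fun a => {T ∈ 𝒯 | a ∈ T}) (by grind)]
  refine prod_eq_one fun a _ => ?_
  rw [prod_const, Int.units_pow_eq_pow_mod_two, Nat.even_iff.mp (h a), pow_zero]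

lemma even_card_filter_eq_neg_one {α : Type*} {s : Finset α} {ψ : α → ℤˣ}
    (h : ∏ x ∈ s, ψ x = 1) : Even #{x ∈ s | ψ x = -1} := by
  rw [← prod_filter_mul_prod_filter_not s (ψ · = -1),
    prod_congr rfl fun x hx => (mem_filter.mp hx).2, prod_const,
    prod_congr rfl fun x hx => (Int.units_eq_one_or _).resolve_right (mem_filter.mp hx).2,
    prod_const_one, mul_one] at h
  exact (neg_one_pow_eq_one_iff_even (by decide)).mp h

lemma even_card_filter_eq_one {α : Type*} {s : Finset α} {ψ : α → ℤˣ}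
    (h : ∏ x ∈ s, ψ x = 1) (hs : Even #s) : Even #{x ∈ s | ψ x = 1} := by
  have hcompl : {x ∈ s | ψ x = 1} = {x ∈ s | ¬ψ x = -1} :=
    filter_congr fun x _ => by rcases Int.units_eq_one_or (ψ x) with h | h <;> simp [h]
  rw [← card_filter_add_card_filter_not (s := s) (ψ · = -1), Nat.even_add] at hs
  rw [hcompl]
  exact hs.mp (even_card_filter_eq_neg_one h)

section

variable {V : Type*}

/-- A subdivision of `K₄` with a branch path for each ordered pair of distinct branch vertices. -/
structure K4Subdivision (G : SimpleGraph V) where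
  branch : Fin 4 → V
  branch_injective : Function.Injective branch
  path (i j : Fin 4) : i ≠ j → G.Walk (branch i) (branch j)
  isPath_path (i j : Fin 4) (h : i ≠ j) : (path i j h).IsPath
  path_swap (i j : Fin 4) (h : i ≠ j) (h' : j ≠ i) : path j i h' = (path i j h).reverse
  exists_eq_branch_of_mem_support (i j k l : Fin 4) (hij : i ≠ j) (hkl : k ≠ l) (v : V) :
    s(i, j) ≠ s(k, l) → v ∈ (path i j hij).support → v ∈ (path k l hkl).support →
      ∃ m ∈ s(i, j), m ∈ s(k, l) ∧ v = branch m
  mem_edgeSet_iff (g : Sym2 V) : g ∈ G.edgeSet ↔ ∃ i j h, g ∈ (path i j h).edges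

theorem IsSubdivisionOfK4.nonempty_k4Subdivision {G : SimpleGraph V}
    (hG : IsSubdivisionOfK4 G) : Nonempty (K4Subdivision G) := by
  obtain ⟨f, hf, P, hP, hPinter, hPedges, -⟩ := hG
  have hgt : ∀ {i j : Fin 4}, i ≠ j → ¬i < j → j < i := fun h h' =>
    lt_of_le_of_ne (not_lt.mp h') h.symm
  let Q (i j : Fin 4) (h : i ≠ j) : G.Walk (f i) (f j) :=
    if hij : i < j then P i j hij else (P j i (hgt h hij)).reverse
  have hQ : ∀ i j (h : i ≠ j), ∃ i' j', ∃ h' : i' < j', s(i, j) = s(i', j') ∧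
      (Q i j h).IsPath ∧ (∀ v, v ∈ (Q i j h).support ↔ v ∈ (P i' j' h').support) ∧
      (∀ g, g ∈ (Q i j h).edges ↔ g ∈ (P i' j' h').edges) := by
    intro i j h
    by_cases hij : i < j
    · refine ⟨i, j, hij, rfl, ?_⟩
      simpa [Q, hij] using (hP i j hij).1
    · refine ⟨j, i, hgt h hij, Sym2.eq_swap, ?_⟩
      simpa [Q, hij] using (hP j i (hgt h hij)).1
  refine ⟨⟨f, hf, Q, ?_, ?_, ?_, ?_⟩⟩
  · intro i j h
    obtain ⟨-, -, -, -, hpath, -⟩ := hQ i j h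
    exact hpath
  · intro i j h _
    by_cases hij : i < j
    · simp [Q, hij, not_lt_of_gt hij]
    · simp [Q, hij, hgt h hij]
  · intro i j k l hij hkl v hne hv hv'
    obtain ⟨i', j', hij', hs, -, hsupp, -⟩ := hQ i j hij
    obtain ⟨k', l', hkl', hs', -, hsupp', -⟩ := hQ k l hkl
    rw [hs, hs'] at hne ⊢
    obtain ⟨h1, h2⟩ := hPinter i' j' hij' k' l' hkl' (fun h => hne (by simp_all))
      v ((hsupp v).mp hv) ((hsupp' v).mp hv')
    rcases h1 with rfl | rfl <;> rcases h2 with h2 | h2 <;> obtain rfl := hf h2 <;> simp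
  · intro g
    rw [hPedges]
    constructor
    · rintro ⟨i, j, hij, hg⟩
      exact ⟨i, j, hij.ne, by simpa [Q, hij] using hg⟩
    · rintro ⟨i, j, h, hg⟩
      obtain ⟨i', j', h', -, -, -, hedges⟩ := hQ i j h
      exact ⟨i', j', h', (hedges g).mp hg⟩

namespace K4Subdivision

open Walk

variable {G : SimpleGraph V} (K : K4Subdivision G)

lemma length_path_pos {i j : Fin 4} (h : i ≠ j) : 0 < (K.path i j h).length :=
  not_nil_iff_lt_length.mp (not_nil_of_ne (K.branch_injective.ne h))

lemma branch_mem_support_path_iff {i j m : Fin 4} (h : i ≠ j) :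
    K.branch m ∈ (K.path i j h).support ↔ m ∈ s(i, j) := by
  refine ⟨fun hm => ?_, fun hm => ?_⟩
  · by_contra hmij
    have hmi : m ≠ i := fun h => hmij (h ▸ Sym2.mem_mk_left _ _)
    obtain ⟨n, hn, hn', hmn⟩ := K.exists_eq_branch_of_mem_support m i i j hmi h _
      (fun hs => hmij (hs ▸ Sym2.mem_mk_left _ _)) (start_mem_support _) hm
    exact hmij (K.branch_injective hmn ▸ hn')
  · rcases Sym2.mem_iff.mp hm with rfl | rfl
    exacts [start_mem_support _, end_mem_support _]

lemma eq_branch_of_mem_support {i j k l m : Fin 4} {hij : i ≠ j} {hkl : k ≠ l}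
    (hm : ∀ n ∈ s(i, j), n ∈ s(k, l) → n = m) {v : V} (hv : v ∈ (K.path i j hij).support)
    (hv' : v ∈ (K.path k l hkl).support) : v = K.branch m := by
  have hne : s(i, j) ≠ s(k, l) := fun h => hij <|
    (hm i (Sym2.mem_mk_left _ _) (h ▸ Sym2.mem_mk_left _ _)).trans
      (hm j (Sym2.mem_mk_right _ _) (h ▸ Sym2.mem_mk_right _ _)).symm
  obtain ⟨n, hn, hn', rfl⟩ := K.exists_eq_branch_of_mem_support i j k l hij hkl v hne hv hv'
  rw [hm n hn hn']

lemma notMem_edges_path_of_ne {i j k l : Fin 4} (hij : i ≠ j) (hkl : k ≠ l)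
    (hne : s(i, j) ≠ s(k, l)) {g : Sym2 V} (hg : g ∈ (K.path i j hij).edges) :
    g ∉ (K.path k l hkl).edges := by
  intro hg'
  induction g using Sym2.ind with | h x y => ?_
  obtain ⟨m, hm, hm', rfl⟩ := K.exists_eq_branch_of_mem_support i j k l hij hkl x hne
    (fst_mem_support_of_mem_edges _ hg) (fst_mem_support_of_mem_edges _ hg')
  obtain ⟨n, hn, hn', rfl⟩ := K.exists_eq_branch_of_mem_support i j k l hij hkl y hne
    (snd_mem_support_of_mem_edges _ hg) (snd_mem_support_of_mem_edges _ hg')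
  have hmn : m ≠ n := fun h => ((K.path i j hij).adj_of_mem_edges hg).ne (congrArg K.branch h)
  exact hne (Sym2.eq_of_ne_mem hmn hm hn hm' hn')

lemma adj_mem_edges_path {i j : Fin 4} (h : i ≠ j) {v z : V} (hv : v ∈ (K.path i j h).support)
    (hvi : v ≠ K.branch i) (hvj : v ≠ K.branch j) (hvz : G.Adj v z) :
    s(v, z) ∈ (K.path i j h).edges := by
  obtain ⟨k, l, hkl, hg⟩ := (K.mem_edgeSet_iff s(v, z)).mp hvz
  by_cases hs : s(i, j) = s(k, l)
  · rcases Sym2.eq_iff.mp hs with ⟨rfl, rfl⟩ | ⟨rfl, rfl⟩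
    · exact hg
    · rwa [K.path_swap i j h hkl, edges_reverse, List.mem_reverse] at hg
  · obtain ⟨m, hm, -, rfl⟩ := K.exists_eq_branch_of_mem_support i j k l h hkl v hs hv
      (fst_mem_support_of_mem_edges _ hg)
    rcases Sym2.mem_iff.mp hm with rfl | rfl
    exacts [absurd rfl hvi, absurd rfl hvj]

variable [DecidableEq V]

/-- Takes the junk value `∅` on the diagonal. -/
def pathEdges : Sym2 (Fin 4) → Finset (Sym2 V) :=
  Sym2.lift ⟨fun i j => if h : i = j then ∅ else (K.path i j h).edges.toFinset, fun i j => by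
    dsimp only
    by_cases h : i = j
    · subst h; rfl
    · rw [dif_neg h, dif_neg (Ne.symm h), K.path_swap i j h (Ne.symm h), edges_reverse,
        List.toFinset_reverse]⟩

lemma pathEdges_mk {i j : Fin 4} (h : i ≠ j) :
    K.pathEdges s(i, j) = (K.path i j h).edges.toFinset := by
  simp [pathEdges, h]

lemma ne_of_mem_pathEdges {i j : Fin 4} {g : Sym2 V} (hg : g ∈ K.pathEdges s(i, j)) : i ≠ j := by
  rintro rfl
  simp [pathEdges] at hg

lemma mem_edgeFinset_of_mem_pathEdges {t : Sym2 (Fin 4)} {g : Sym2 V} (hg : g ∈ K.pathEdges t) :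
    t ∈ (⊤ : SimpleGraph (Fin 4)).edgeFinset := by
  induction t using Sym2.ind with | h i j => simpa using K.ne_of_mem_pathEdges hg

lemma mem_edgeSet_iff_exists_mem_pathEdges (g : Sym2 V) :
    g ∈ G.edgeSet ↔ ∃ t, g ∈ K.pathEdges t := by
  rw [K.mem_edgeSet_iff]
  constructor
  · rintro ⟨i, j, h, hg⟩
    exact ⟨s(i, j), by simpa [K.pathEdges_mk h] using hg⟩
  · rintro ⟨t, hg⟩
    induction t using Sym2.ind with | h i j => ?_
    have h := K.ne_of_mem_pathEdges hg
    exact ⟨i, j, h, by simpa [K.pathEdges_mk h] using hg⟩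

lemma pathEdges_nonempty {t : Sym2 (Fin 4)} (ht : t ∈ (⊤ : SimpleGraph (Fin 4)).edgeFinset) :
    (K.pathEdges t).Nonempty := by
  induction t using Sym2.ind with | h i j => ?_
  have h : i ≠ j := by simpa using ht
  rw [K.pathEdges_mk h]
  exact ⟨_, List.mem_toFinset.mpr <|
    mk_start_snd_mem_edges (not_nil_of_ne (K.branch_injective.ne h))⟩

lemma disjoint_pathEdges {t t' : Sym2 (Fin 4)} (hne : t ≠ t') :
    Disjoint (K.pathEdges t) (K.pathEdges t') := by
  rw [Finset.disjoint_left]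
  intro g hg hg'
  induction t using Sym2.ind with | h i j => ?_
  induction t' using Sym2.ind with | h k l => ?_
  have hij := K.ne_of_mem_pathEdges hg
  have hkl := K.ne_of_mem_pathEdges hg'
  rw [K.pathEdges_mk hij, List.mem_toFinset] at hg
  rw [K.pathEdges_mk hkl, List.mem_toFinset] at hg'
  exact K.notMem_edges_path_of_ne hij hkl hne hg hg'

lemma eq_of_mem_pathEdges {t t' : Sym2 (Fin 4)} {g : Sym2 V} (hg : g ∈ K.pathEdges t)
    (hg' : g ∈ K.pathEdges t') : t = t' := by
  by_contra hne
  exact Finset.disjoint_left.mp (K.disjoint_pathEdges hne) hg hg'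

lemma card_filter_branch_mem_pathEdges {t : Sym2 (Fin 4)}
    (ht : t ∈ (⊤ : SimpleGraph (Fin 4)).edgeFinset) (i : Fin 4) :
    #{g ∈ K.pathEdges t | K.branch i ∈ g} = if i ∈ t then 1 else 0 := by
  split_ifs with hi
  · obtain ⟨j, rfl⟩ := Sym2.mem_iff_exists.mp hi
    have hij : i ≠ j := by simpa using ht
    rw [K.pathEdges_mk hij]
    exact (K.isPath_path i j hij).card_filter_start_mem_edges (K.branch_injective.ne hij)
  · rw [card_eq_zero, filter_eq_empty_iff]
    intro g hg hig
    induction t using Sym2.ind with | h j k => ?_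
    have hjk := K.ne_of_mem_pathEdges hg
    rw [K.pathEdges_mk hjk, List.mem_toFinset] at hg
    exact hi ((K.branch_mem_support_path_iff hjk).mp (mem_support_of_mem_edges hg hig))

lemma pathEdges_subset_of_isTrail {u : V} {w : G.Walk u u} (hw : w.IsTrail) {t : Sym2 (Fin 4)}
    {g : Sym2 V} (hgt : g ∈ K.pathEdges t) (hgw : g ∈ w.edges.toFinset) :
    K.pathEdges t ⊆ w.edges.toFinset := by
  induction t using Sym2.ind with | h i j => ?_
  have hij := K.ne_of_mem_pathEdges hgt
  rw [K.pathEdges_mk hij, List.mem_toFinset] at hgt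
  rw [K.pathEdges_mk hij]
  intro g' hg'
  rw [List.mem_toFinset] at hgw hg' ⊢
  exact hw.edges_subset_of_interior_adj (K.isPath_path i j hij)
    (fun v hv hvi hvj z hz => K.adj_mem_edges_path hij hv hvi hvj hz) hgt hgw hg'


def lift (T : Finset (Sym2 (Fin 4))) : Finset (Sym2 V) := T.biUnion K.pathEdges

def pattern (s : Finset (Sym2 V)) : Finset (Sym2 (Fin 4)) :=
  {t ∈ (⊤ : SimpleGraph (Fin 4)).edgeFinset | K.pathEdges t ⊆ s}

lemma pathEdges_subset_lift {T : Finset (Sym2 (Fin 4))} {t : Sym2 (Fin 4)} (ht : t ∈ T) :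
    K.pathEdges t ⊆ K.lift T :=
  subset_biUnion_of_mem _ ht

lemma mem_of_mem_pathEdges_of_mem_lift {T : Finset (Sym2 (Fin 4))} {t : Sym2 (Fin 4)}
    {g : Sym2 V} (hgt : g ∈ K.pathEdges t) (hgT : g ∈ K.lift T) : t ∈ T := by
  obtain ⟨t', ht', hgt'⟩ := mem_biUnion.mp hgT
  rwa [K.eq_of_mem_pathEdges hgt hgt']

lemma pattern_lift {T : Finset (Sym2 (Fin 4))} (hT : T ⊆ (⊤ : SimpleGraph (Fin 4)).edgeFinset) :
    K.pattern (K.lift T) = T := by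
  ext t
  simp only [pattern, mem_filter]
  refine ⟨fun ⟨ht, hsub⟩ => ?_, fun ht => ⟨hT ht, K.pathEdges_subset_lift ht⟩⟩
  obtain ⟨g, hg⟩ := K.pathEdges_nonempty ht
  exact K.mem_of_mem_pathEdges_of_mem_lift hg (hsub hg)

lemma esign_lift (σ : Sym2 V → ℤˣ) (T : Finset (Sym2 (Fin 4))) :
    esign σ (K.lift T) = ∏ t ∈ T, esign σ (K.pathEdges t) :=
  prod_biUnion fun _ _ _ _ hne => K.disjoint_pathEdges hne

lemma card_filter_branch_mem_lift {T : Finset (Sym2 (Fin 4))}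
    (hT : T ⊆ (⊤ : SimpleGraph (Fin 4)).edgeFinset) (i : Fin 4) :
    #{g ∈ K.lift T | K.branch i ∈ g} = #{t ∈ T | i ∈ t} := by
  rw [lift, filter_biUnion, card_biUnion fun _ _ _ _ hne =>
    disjoint_filter_filter (K.disjoint_pathEdges hne), card_filter]
  exact sum_congr rfl fun t ht => K.card_filter_branch_mem_pathEdges (hT ht) i

lemma lift_pattern_of_isCircleOf {s : Finset (Sym2 V)} (hs : IsCircleOf G s) :
    K.lift (K.pattern s) = s := by
  obtain ⟨u, w, hw, rfl⟩ := hs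
  refine Subset.antisymm (biUnion_subset.mpr fun t ht => (mem_filter.mp ht).2) fun g hg => ?_
  obtain ⟨t, hgt⟩ := (K.mem_edgeSet_iff_exists_mem_pathEdges g).mp
    (w.edges_subset_edgeSet (List.mem_toFinset.mp hg))
  exact mem_biUnion.mpr ⟨t, mem_filter.mpr ⟨K.mem_edgeFinset_of_mem_pathEdges hgt,
    K.pathEdges_subset_of_isTrail hw.isTrail hgt hg⟩, hgt⟩

lemma pattern_mem_k4Circles {s : Finset (Sym2 V)} (hs : IsCircleOf G s) (hne : s.Nonempty) :
    K.pattern s ∈ k4Circles := by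
  have hT : K.pattern s ⊆ (⊤ : SimpleGraph (Fin 4)).edgeFinset := filter_subset _ _
  have hlift := K.lift_pattern_of_isCircleOf hs
  refine mem_filter.mpr ⟨mem_powerset.mpr hT, ?_, fun i => ?_⟩
  · rw [← hlift, lift, biUnion_nonempty] at hne
    obtain ⟨t, ht, -⟩ := hne
    exact ⟨t, ht⟩
  · rw [← K.card_filter_branch_mem_lift hT, hlift]
    obtain ⟨u, w, hw, rfl⟩ := hs
    exact hw.isTrail.even_card_filter_mem_edges _

lemma isCircleOf_lift_triangle {i j k : Fin 4} (hij : i ≠ j) (hjk : j ≠ k) (hik : i ≠ k) :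
    IsCircleOf G (K.lift {s(i, j), s(j, k), s(i, k)}) := by
  have hki : k ≠ i := hik.symm
  refine ⟨K.branch i, (K.path i j hij).append ((K.path j k hjk).append (K.path k i hki)), ?_, ?_⟩
  · refine (K.isPath_path i j hij).isCycle_append_of_support_inter
      ((K.isPath_path j k hjk).append_of_support_inter (K.isPath_path k i hki)
        fun v hv hv' => K.eq_branch_of_mem_support (by grind) hv hv') ?_ fun v hv hv' => ?_
    · have := K.length_path_pos hjk
      have := K.length_path_pos hki
      right
      rw [length_append]
      omega
    · rcases (mem_support_append_iff _ _).mp hv' with hv' | hv'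
      · exact Or.inr (K.eq_branch_of_mem_support (by grind) hv hv')
      · exact Or.inl (K.eq_branch_of_mem_support (by grind) hv hv')
  · rw [edges_append, edges_append, List.toFinset_append, List.toFinset_append,
      ← K.pathEdges_mk, ← K.pathEdges_mk, ← K.pathEdges_mk, Sym2.eq_swap (a := k)]
    simp [lift]

lemma isCircleOf_lift_quadrangle {i j k l : Fin 4} (hij : i ≠ j) (hjk : j ≠ k) (hkl : k ≠ l)
    (hik : i ≠ k) (hjl : j ≠ l) (hil : i ≠ l) :
    IsCircleOf G (K.lift {s(i, j), s(j, k), s(k, l), s(i, l)}) := by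
  have hli : l ≠ i := hil.symm
  have hkli := (K.isPath_path k l hkl).append_of_support_inter (K.isPath_path l i hli)
    fun v hv hv' => K.eq_branch_of_mem_support (by grind) hv hv'
  have hjkli := (K.isPath_path j k hjk).append_of_support_inter hkli fun v hv hv' => by
    rcases (mem_support_append_iff _ _).mp hv' with hv' | hv'
    exacts [K.eq_branch_of_mem_support (by grind) hv hv',
      K.eq_branch_of_mem_support (by grind) hv hv']
  refine ⟨K.branch i, (K.path i j hij).append
    ((K.path j k hjk).append ((K.path k l hkl).append (K.path l i hli))), ?_, ?_⟩
  · refine (K.isPath_path i j hij).isCycle_append_of_support_inter hjkli ?_ fun v hv hv' => ?_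
    · have := K.length_path_pos hjk
      have := K.length_path_pos hkl
      right
      rw [length_append, length_append]
      omega
    · rcases (mem_support_append_iff _ _).mp hv' with hv' | hv'
      · exact Or.inr (K.eq_branch_of_mem_support (by grind) hv hv')
      rcases (mem_support_append_iff _ _).mp hv' with hv' | hv'
      exacts [Or.inl (K.eq_branch_of_mem_support (by grind) hv hv'),
        Or.inl (K.eq_branch_of_mem_support (by grind) hv hv')]
  · rw [edges_append, edges_append, edges_append, List.toFinset_append, List.toFinset_append,
      List.toFinset_append, ← K.pathEdges_mk, ← K.pathEdges_mk, ← K.pathEdges_mk,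
      ← K.pathEdges_mk, Sym2.eq_swap (a := l)]
    simp [lift]

lemma isCircleOf_lift {T : Finset (Sym2 (Fin 4))} (hT : T ∈ k4Circles) :
    IsCircleOf G (K.lift T) := by
  rcases k4Circles_triangle_or_quadrangle T hT with
    ⟨i, j, k, hij, hjk, hik, rfl⟩ | ⟨i, j, k, l, hij, hjk, hkl, hik, hjl, hil, rfl⟩
  exacts [K.isCircleOf_lift_triangle hij hjk hik,
    K.isCircleOf_lift_quadrangle hij hjk hkl hik hjl hil]

lemma ncard_setOf_isCircleOf {e : Sym2 V} {t₀ : Sym2 (Fin 4)} (he : e ∈ K.pathEdges t₀)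
    (P : Finset (Sym2 V) → Prop) [DecidablePred P] :
    {s | IsCircleOf G s ∧ e ∈ s ∧ P s}.ncard = #{T ∈ {T ∈ k4Circles | t₀ ∈ T} | P (K.lift T)} := by
  have hset : {s | IsCircleOf G s ∧ e ∈ s ∧ P s} =
      ({T ∈ {T ∈ k4Circles | t₀ ∈ T} | P (K.lift T)}.image K.lift : Set _) := by
    ext s
    simp only [coe_image, coe_filter, Set.mem_image, mem_filter]
    constructor
    · rintro ⟨hs, hes, hP⟩
      have hlift := K.lift_pattern_of_isCircleOf hs
      refine ⟨K.pattern s, ⟨⟨K.pattern_mem_k4Circles hs ⟨e, hes⟩, ?_⟩, by rwa [hlift]⟩, hlift⟩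
      exact K.mem_of_mem_pathEdges_of_mem_lift he (by rwa [hlift])
    · rintro ⟨T, ⟨⟨hT, ht₀⟩, hP⟩, rfl⟩
      exact ⟨K.isCircleOf_lift hT, K.pathEdges_subset_lift ht₀ he, hP⟩
  rw [hset, Set.ncard_coe_finset, card_image_of_injOn]
  intro T hT T' hT' h
  simp only [coe_filter, mem_filter, Set.mem_ofPred_eq] at hT hT'
  rw [← K.pattern_lift (subset_of_mem_k4Circles hT.1.1), h,
    K.pattern_lift (subset_of_mem_k4Circles hT'.1.1)]

end K4Subdivision

end

theorem even_signed_circles_in_K4_subdivision {V : Type*} [DecidableEq V]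
    (G : SimpleGraph V) (σ : Sym2 V → ℤˣ)
    (hG : IsSubdivisionOfK4 G) (e : Sym2 V) (he : e ∈ G.edgeSet) :
    Even {s : Finset (Sym2 V) | IsCircleOf G s ∧ e ∈ s ∧ esign σ s = -1}.ncard ∧
    Even {s : Finset (Sym2 V) | IsCircleOf G s ∧ e ∈ s ∧ esign σ s = 1}.ncard := by
  obtain ⟨K⟩ := hG.nonempty_k4Subdivision
  obtain ⟨t₀, he₀⟩ := (K.mem_edgeSet_iff_exists_mem_pathEdges e).mp he
  have ht₀ := K.mem_edgeFinset_of_mem_pathEdges he₀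
  have hprod : ∏ T ∈ {T ∈ k4Circles | t₀ ∈ T}, esign σ (K.lift T) = 1 := by
    simp only [K.esign_lift]
    exact prod_prod_eq_one_of_forall_even (even_card_filter_k4Circles t₀ ht₀) _
  have hcard : Even #{T ∈ k4Circles | t₀ ∈ T} := by
    simpa [filter_filter] using even_card_filter_k4Circles t₀ ht₀ t₀
  rw [K.ncard_setOf_isCircleOf he₀, K.ncard_setOf_isCircleOf he₀]
  exact ⟨even_card_filter_eq_neg_one hprod, even_card_filter_eq_one hprod hcard⟩
end

section
/- Let Σ be a signed graph whose underlying graph is a 2-connected block B, let e be an edge lying in a circle C, and suppose there is a bridge D of C with at least three vertices of attachment. Then e lies in at least two circles of the same sign as C; in particular, e is not contained in a unique circle of that sign. -/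
open SimpleGraph Finset

variable {V : Type*} [DecidableEq V]

/-!
A chord has only two attachments, so the bridge comes from a component `D` of `G - V(C)`. Since
`D` is connected and has three attachments `x, y, t`, it contains a tripod: a vertex `c` of `D`
joined to `x`, `y`, `t` by paths that meet only at `c` and avoid `C` elsewhere. Label the
attachments so that `e` lies on the arc `A₁` of `C` from `x` to `y`, and let `A₂`, `A₃` be the arcs
from `y` to `t` and from `t` to `x`. Closing `A₁`, `A₁A₂` and `A₃A₁` through the tripod gives three
circles through `e` and `c`, hence all different from `C`. Each arc of `C` lies in an odd number of
them and each leg of the tripod in exactly two, so the product of their signs is the sign of `C`;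
and if three elements of `ℤˣ` multiply to `s`, one of them is `s`.
-/

lemma Int.units_eq_of_mul_mul_eq {k₁ k₂ k₃ c : ℤˣ} (h : k₁ * k₂ * k₃ = c) :
    k₁ = c ∨ k₂ = c ∨ k₃ = c := by
  by_contra! hne
  obtain ⟨h₁, h₂, h₃⟩ := hne
  rw [Int.units_ne_iff_eq_neg] at h₁ h₂ h₃
  subst h₁ h₂ h₃
  simp only [neg_mul_neg, Int.units_mul_self, one_mul] at h
  exact Int.units_ne_iff_eq_neg.mpr rfl h

lemma Int.units_three_circle_signs (a₁ a₂ a₃ p₁ p₂ p₃ : ℤˣ) :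
    a₁ * (p₂ * p₁) * (a₁ * a₂ * (p₃ * p₁)) * (a₃ * a₁ * (p₂ * p₃)) = a₁ * (a₂ * a₃) :=
  calc _ = a₁ * (a₂ * a₃) * (a₁ * a₁) * (p₁ * p₁) * (p₂ * p₂) * (p₃ * p₃) := by ac_rfl
    _ = _ := by simp only [Int.units_mul_self, mul_one]

namespace SimpleGraph

namespace Walk

section

omit [DecidableEq V]

variable {G : SimpleGraph V}

lemma wsign_append (σ : Sym2 V → ℤˣ) {u v x : V} (p : G.Walk u v) (q : G.Walk v x) :
    wsign σ (p.append q) = wsign σ p * wsign σ q := by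
  simp [wsign, edges_append]

lemma wsign_reverse (σ : Sym2 V → ℤˣ) {u v : V} (p : G.Walk u v) :
    wsign σ p.reverse = wsign σ p := by
  simp [wsign, edges_reverse, List.prod_reverse]

lemma IsPath.start_notMem_support_tail {u v : V} {p : G.Walk u v} (hp : p.IsPath) :
    u ∉ p.support.tail := by
  have h := hp.support_nodup
  rw [← p.cons_tail_support] at h
  exact (List.nodup_cons.mp h).1

lemma IsPath.append_of_inter {u v x : V} {p : G.Walk u v} {q : G.Walk v x}
    (hp : p.IsPath) (hq : q.IsPath) (hpq : ∀ s ∈ p.support, s ∈ q.support → s = v) :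
    (p.append q).IsPath := by
  refine IsPath.mk' ?_
  rw [support_append, List.nodup_append]
  refine ⟨hp.support_nodup, hq.support_nodup.sublist (List.tail_sublist _), ?_⟩
  rintro s hsp s' hsq rfl
  obtain rfl := hpq s hsp (List.mem_of_mem_tail hsq)
  exact hq.start_notMem_support_tail hsq

lemma IsPath.isCycle_append_of_inter {u v : V} {p : G.Walk u v} {r : G.Walk v u}
    (hp : p.IsPath) (hr : r.IsPath) (hlen : 1 < r.length)
    (hpr : ∀ s ∈ r.support, s ∈ p.support → s = u ∨ s = v) :
    (p.append r).IsCycle := by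
  refine hp.isCycle_append hr (List.disjoint_left.mpr fun s hsp hsr => ?_) (Or.inr hlen)
  rcases hpr s (List.mem_of_mem_tail hsr) (List.mem_of_mem_tail hsp) with rfl | rfl
  · exact hp.start_notMem_support_tail hsp
  · exact hr.start_notMem_support_tail hsr

lemma IsPath.isCycle_append_legs {D : Set V} {x y c : V} {p : G.Walk x y} {P : G.Walk c y}
    {Q : G.Walk c x} (hp : p.IsPath) (hP : P.IsPath) (hQ : Q.IsPath) (hc : c ∈ D)
    (hpD : ∀ s ∈ p.support, s ∉ D) (hPD : ∀ s ∈ P.support, s = y ∨ s ∈ D)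
    (hQD : ∀ s ∈ Q.support, s = x ∨ s ∈ D) (hPQ : ∀ s ∈ P.support, s ∈ Q.support → s = c) :
    (p.append (P.reverse.append Q)).IsCycle := by
  have hPlen : P.length ≠ 0 := fun h => hpD y p.end_mem_support (eq_of_length_eq_zero h ▸ hc)
  have hQlen : Q.length ≠ 0 := fun h => hpD x p.start_mem_support (eq_of_length_eq_zero h ▸ hc)
  refine hp.isCycle_append_of_inter (hP.reverse.append_of_inter hQ ?_) ?_ ?_
  · simpa using hPQ
  · simp only [length_append, length_reverse]
    omega
  · intro s hs hsp
    rw [mem_support_append_iff, support_reverse, List.mem_reverse] at hs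
    exact hs.elim (fun h => Or.inr ((hPD s h).resolve_right (hpD s hsp)))
      (fun h => Or.inl ((hQD s h).resolve_right (hpD s hsp)))

lemma IsCycle.append_comm {u v : V} {p : G.Walk u v} {q : G.Walk v u}
    (h : (p.append q).IsCycle) : (q.append p).IsCycle := by
  rw [isCycle_def, isTrail_def, edges_append, tail_support_append] at h ⊢
  refine ⟨List.perm_append_comm.nodup_iff.mp h.1, fun hnil => h.2.1 ?_,
    List.perm_append_comm.nodup_iff.mp h.2.2⟩
  rw [eq_nil_iff_nil, ← length_eq_zero_iff, length_append, add_comm, ← length_append,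
    length_eq_zero_iff, ← eq_nil_iff_nil, hnil]

end

variable {G : SimpleGraph V}

lemma IsTrail.esign_edges_toFinset (σ : Sym2 V → ℤˣ) {u v : V} {p : G.Walk u v}
    (hp : p.IsTrail) : esign σ p.edges.toFinset = wsign σ p :=
  List.prod_toFinset σ hp.edges_nodup

lemma edges_toFinset_append_comm {u v : V} (p : G.Walk u v) (q : G.Walk v u) :
    (q.append p).edges.toFinset = (p.append q).edges.toFinset := by
  simp only [edges_append, List.toFinset_append, Finset.union_comm]

lemma mem_support_of_edges_toFinset_eq {u v x y s : V} {p : G.Walk u v} {q : G.Walk x y}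
    (hp : ¬p.Nil) (h : p.edges.toFinset = q.edges.toFinset) (hs : s ∈ p.support) :
    s ∈ q.support := by
  obtain ⟨f, hf, hsf⟩ := (mem_support_iff_exists_mem_edges_of_not_nil hp).mp hs
  refine mem_support_of_mem_edges ?_ hsf
  rw [← List.mem_toFinset, ← h, List.mem_toFinset]
  exact hf

lemma IsCycle.rotate_arcs {x y t : V} {A₁ : G.Walk x y} {A₂ : G.Walk y t} {A₃ : G.Walk t x}
    (h : (A₁.append (A₂.append A₃)).IsCycle) :
    (A₂.append (A₃.append A₁)).IsCycle ∧
      (A₂.append (A₃.append A₁)).edges.toFinset = (A₁.append (A₂.append A₃)).edges.toFinset := by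
  rw [append_assoc A₂, edges_toFinset_append_comm A₁]
  exact ⟨h.append_comm, rfl⟩

lemma IsCycle.exists_three_arcs {a : V} {w : G.Walk a a} (hw : w.IsCycle) {T : Set V}
    (hTw : ∀ x ∈ T, x ∈ w.support) (hT : 2 < T.ncard) :
    ∃ x ∈ T, ∃ y ∈ T, ∃ t ∈ T, x ≠ y ∧ y ≠ t ∧ t ≠ x ∧
      ∃ (A₁ : G.Walk x y) (A₂ : G.Walk y t) (A₃ : G.Walk t x),
        (A₁.append (A₂.append A₃)).IsCycle ∧
        (A₁.append (A₂.append A₃)).edges.toFinset = w.edges.toFinset := by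
  obtain ⟨u, hu, v, hv, z, hz, huv, huz, hvz⟩ :=
    (Set.two_lt_ncard (Set.finite_of_ncard_pos (by omega))).mp hT
  have hw' := hw.rotate (hTw u hu)
  have hE : (w.rotate u (hTw u hu)).edges.toFinset = w.edges.toFinset :=
    List.toFinset_eq_of_perm _ _ (rotate_edges ..).perm
  obtain ⟨P, Q, hPQ⟩ := mem_support_iff_exists_append.mp
    ((mem_support_rotate_iff ..).mpr (hTw v hv) : v ∈ (w.rotate u (hTw u hu)).support)
  have hz' : z ∈ (P.append Q).support := hPQ ▸ (mem_support_rotate_iff ..).mpr (hTw z hz)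
  rw [hPQ] at hw' hE
  rcases (mem_support_append_iff _ _).mp hz' with hzP | hzQ
  · obtain ⟨P₁, P₂, rfl⟩ := mem_support_iff_exists_append.mp hzP
    rw [← append_assoc] at hw' hE
    exact ⟨u, hu, z, hz, v, hv, huz, hvz.symm, huv.symm, P₁, P₂, Q, hw', hE⟩
  · obtain ⟨Q₁, Q₂, rfl⟩ := mem_support_iff_exists_append.mp hzQ
    exact ⟨u, hu, v, hv, z, hz, huv, hvz, huz.symm, P, Q₁, Q₂, hw', hE⟩

lemma IsCycle.exists_three_arcs_of_mem_edges {a : V} {w : G.Walk a a} (hw : w.IsCycle) {e : Sym2 V}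
    (he : e ∈ w.edges) {T : Set V} (hTw : ∀ x ∈ T, x ∈ w.support) (hT : 2 < T.ncard) :
    ∃ x ∈ T, ∃ y ∈ T, ∃ t ∈ T, x ≠ y ∧ y ≠ t ∧ t ≠ x ∧
      ∃ (A₁ : G.Walk x y) (A₂ : G.Walk y t) (A₃ : G.Walk t x),
        (A₁.append (A₂.append A₃)).IsCycle ∧
        (A₁.append (A₂.append A₃)).edges.toFinset = w.edges.toFinset ∧ e ∈ A₁.edges := by
  obtain ⟨x, hx, y, hy, t, ht, hxy, hyt, htx, A₁, A₂, A₃, hC, hE⟩ := hw.exists_three_arcs hTw hT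
  have he' : e ∈ (A₁.append (A₂.append A₃)).edges.toFinset := hE ▸ List.mem_toFinset.mpr he
  simp only [List.mem_toFinset, edges_append, List.mem_append] at he'
  rcases he' with he | he | he
  · exact ⟨x, hx, y, hy, t, ht, hxy, hyt, htx, A₁, A₂, A₃, hC, hE, he⟩
  · obtain ⟨hC', hE'⟩ := hC.rotate_arcs
    exact ⟨y, hy, t, ht, x, hx, hyt, htx, hxy, A₂, A₃, A₁, hC', hE'.trans hE, he⟩
  · obtain ⟨hC', hE'⟩ := hC.rotate_arcs
    obtain ⟨hC'', hE''⟩ := hC'.rotate_arcs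
    exact ⟨t, ht, x, hx, y, hy, htx, hxy, hyt, A₃, A₁, A₂, hC'', hE''.trans (hE'.trans hE), he⟩

lemma IsPath.eq_of_mem_takeUntil_of_mem_dropUntil {u v c : V} {p : G.Walk u v} (hp : p.IsPath)
    (hc : c ∈ p.support) :
    ∀ s ∈ (p.takeUntil c hc).support, s ∈ (p.dropUntil c hc).support → s = c := by
  intro s hs₁ hs₂
  have h := hp.support_nodup
  rw [← p.take_spec hc, support_append, List.nodup_append] at h
  rcases (mem_support_iff _).mp hs₂ with hs | hs
  · exact hs
  · exact absurd rfl (h.2.2 s hs₁ s hs)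

lemma exists_isPath_to_set {t b : V} (q : G.Walk t b) {S : Set V} (hb : b ∈ S) :
    ∃ c ∈ S, ∃ Q : G.Walk t c, Q.IsPath ∧ (∀ s ∈ Q.support, s ∈ q.support) ∧
      ∀ s ∈ Q.support, s ∈ S → s = c := by
  classical
  -- a shortest walk from `t` to `S` along `q` meets `S` only at its end
  have hex : ∃ n, ∃ c ∈ S, ∃ Q : G.Walk t c, (∀ s ∈ Q.support, s ∈ q.support) ∧ Q.length = n :=
    ⟨_, b, hb, q, fun _ h => h, rfl⟩
  obtain ⟨c, hc, Q, hQq, hQlen⟩ := Nat.find_spec hex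
  have hBq : ∀ s ∈ Q.bypass.support, s ∈ q.support :=
    fun s hs => hQq s (Q.support_bypass_subset_support hs)
  refine ⟨c, hc, Q.bypass, Q.bypass_isPath, hBq, fun s hs hsS => ?_⟩
  by_contra hsc
  have hmin := Nat.find_min' hex ⟨s, hsS, Q.bypass.takeUntil s hs,
    fun s' h' => hBq s' (Q.bypass.support_takeUntil_subset_support hs h'), rfl⟩
  have := length_takeUntil_lt_length hs hsc
  have := Q.length_bypass_le_length
  omega

end Walk

variable {G : SimpleGraph V}

open Walk

lemma exists_isPath_of_induce_connected {D : Set V} (hD : (G.induce D).Connected) {d₁ d₂ : V}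
    (hd₁ : d₁ ∈ D) (hd₂ : d₂ ∈ D) : ∃ p : G.Walk d₁ d₂, p.IsPath ∧ ∀ s ∈ p.support, s ∈ D := by
  obtain ⟨q⟩ := hD.preconnected ⟨d₁, hd₁⟩ ⟨d₂, hd₂⟩
  have hqD : ∀ s ∈ (q.bypass.map (Embedding.induce D).toHom).support, s ∈ D := by
    intro s hs
    rw [Walk.support_map, List.mem_map] at hs
    obtain ⟨s, -, rfl⟩ := hs
    exact s.2
  exact ⟨_, q.bypass_isPath.map Subtype.val_injective, hqD⟩

lemma exists_isPath_of_induce_connected_of_adj {D : Set V} (hD : (G.induce D).Connected)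
    {x d₀ d : V} (hx : x ∉ D) (hd₀ : d₀ ∈ D) (hxd₀ : G.Adj x d₀) (hd : d ∈ D) :
    ∃ p : G.Walk x d, p.IsPath ∧ ∀ s ∈ p.support, s = x ∨ s ∈ D := by
  obtain ⟨R, hR, hRD⟩ := exists_isPath_of_induce_connected hD hd₀ hd
  refine ⟨cons hxd₀ R, hR.cons fun h => hx (hRD x h), fun s hs => ?_⟩
  rw [support_cons, List.mem_cons] at hs
  exact hs.imp_right (hRD s)

lemma exists_isPath_through_of_induce_connected {D : Set V} (hD : (G.induce D).Connected)
    {x y dx dy : V} (hx : x ∉ D) (hy : y ∉ D) (hxy : x ≠ y) (hdx : dx ∈ D) (hxdx : G.Adj x dx)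
    (hdy : dy ∈ D) (hydy : G.Adj y dy) :
    ∃ P : G.Walk x y, P.IsPath ∧ dx ∈ P.support ∧ ∀ s ∈ P.support, s = x ∨ s = y ∨ s ∈ D := by
  obtain ⟨Py, hPy, hPyD⟩ := exists_isPath_of_induce_connected_of_adj hD hy hdy hydy hdx
  refine ⟨cons hxdx Py.reverse, hPy.reverse.cons fun h => (hPyD x (by simpa using h)).elim hxy hx,
    by simp, fun s hs => ?_⟩
  rw [support_cons, List.mem_cons, support_reverse, List.mem_reverse] at hs
  exact hs.imp_right (hPyD s)

structure IsTripod (D : Set V) {c x y t : V} (P₁ : G.Walk c x) (P₂ : G.Walk c y)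
    (P₃ : G.Walk c t) : Prop where
  center_mem : c ∈ D
  isPath₁ : P₁.IsPath
  isPath₂ : P₂.IsPath
  isPath₃ : P₃.IsPath
  support₁ : ∀ s ∈ P₁.support, s = x ∨ s ∈ D
  support₂ : ∀ s ∈ P₂.support, s = y ∨ s ∈ D
  support₃ : ∀ s ∈ P₃.support, s = t ∨ s ∈ D
  inter₁₂ : ∀ s ∈ P₁.support, s ∈ P₂.support → s = c
  inter₁₃ : ∀ s ∈ P₁.support, s ∈ P₃.support → s = c
  inter₂₃ : ∀ s ∈ P₂.support, s ∈ P₃.support → s = c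

lemma exists_isTripod {D : Set V} (hD : (G.induce D).Connected) {x y t : V}
    (hx : x ∉ D) (hy : y ∉ D) (ht : t ∉ D) (hxy : x ≠ y) (hyt : y ≠ t) (htx : t ≠ x)
    (hxD : ∃ d ∈ D, G.Adj x d) (hyD : ∃ d ∈ D, G.Adj y d) (htD : ∃ d ∈ D, G.Adj t d) :
    ∃ (c : V) (P₁ : G.Walk c x) (P₂ : G.Walk c y) (P₃ : G.Walk c t), IsTripod D P₁ P₂ P₃ := by
  obtain ⟨dx, hdx, hxdx⟩ := hxD
  obtain ⟨dy, hdy, hydy⟩ := hyD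
  obtain ⟨dt, hdt, htdt⟩ := htD
  obtain ⟨P, hP, hdxP, hPD⟩ :=
    exists_isPath_through_of_induce_connected hD hx hy hxy hdx hxdx hdy hydy
  obtain ⟨Q₀, -, hQ₀D⟩ := exists_isPath_of_induce_connected_of_adj hD ht hdt htdt hdx
  obtain ⟨c, hcP : c ∈ P.support, Q, hQ, hQQ₀, hQP⟩ :=
    Q₀.exists_isPath_to_set (S := {s | s ∈ P.support}) hdxP
  have hQD : ∀ s ∈ Q.support, s = t ∨ s ∈ D := fun s hs => hQ₀D s (hQQ₀ s hs)
  have hcD : c ∈ D := by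
    refine (hQD c Q.end_mem_support).resolve_left ?_
    rintro rfl
    rcases hPD c hcP with h | h | h
    exacts [htx h, hyt h.symm, ht h]
  have hsplit := hP.eq_of_mem_takeUntil_of_mem_dropUntil hcP
  refine ⟨c, (P.takeUntil c hcP).reverse, P.dropUntil c hcP, Q.reverse, hcD,
    (hP.takeUntil hcP).reverse, hP.dropUntil hcP, hQ.reverse, ?_, ?_, by simpa using hQD,
    ?_, ?_, ?_⟩
  · intro s hs
    rw [support_reverse, List.mem_reverse] at hs
    rcases hPD s (P.support_takeUntil_subset_support hcP hs) with h | rfl | h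
    · exact Or.inl h
    · exact absurd (hsplit s hs (P.dropUntil c hcP).end_mem_support ▸ hcD) hy
    · exact Or.inr h
  · intro s hs
    rcases hPD s (P.support_dropUntil_subset_support hcP hs) with rfl | h | h
    · exact absurd (hsplit s (P.takeUntil c hcP).start_mem_support hs ▸ hcD) hx
    · exact Or.inl h
    · exact Or.inr h
  · intro s h₁ h₂
    rw [support_reverse, List.mem_reverse] at h₁
    exact hsplit s h₁ h₂
  · intro s h₁ h₃
    rw [support_reverse, List.mem_reverse] at h₁ h₃
    exact hQP s h₃ (P.support_takeUntil_subset_support hcP h₁)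
  · intro s h₂ h₃
    rw [support_reverse, List.mem_reverse] at h₃
    exact hQP s h₃ (P.support_dropUntil_subset_support hcP h₂)

namespace Walk

lemma IsCycle.exists_isCircleOf_ne {σ : Sym2 V → ℤˣ} {u x c : V} {C : G.Walk u u}
    {K : G.Walk x x} (hK : K.IsCycle) (hcK : c ∈ K.support) (hcC : c ∉ C.support)
    {e : Sym2 V} (he : e ∈ K.edges) (hσ : wsign σ K = esign σ C.edges.toFinset) :
    ∃ s, s ≠ C.edges.toFinset ∧ IsCircleOf G s ∧ e ∈ s ∧ esign σ s = esign σ C.edges.toFinset :=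
  ⟨K.edges.toFinset, fun h => hcC (mem_support_of_edges_toFinset_eq hK.not_nil h hcK),
    ⟨x, K, hK, rfl⟩, List.mem_toFinset.mpr he, by rw [hK.isTrail.esign_edges_toFinset, hσ]⟩

lemma IsCycle.exists_isCircleOf_of_isTripod (σ : Sym2 V → ℤˣ) {D : Set V} {u v z c : V}
    (huv : u ≠ v) (hvz : v ≠ z) (hzu : z ≠ u)
    {A₁ : G.Walk u v} {A₂ : G.Walk v z} {A₃ : G.Walk z u}
    (hC : (A₁.append (A₂.append A₃)).IsCycle) (hD : ∀ s ∈ D, s ∉ (A₁.append (A₂.append A₃)).support)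
    {Pu : G.Walk c u} {Pv : G.Walk c v} {Pz : G.Walk c z} (hT : IsTripod D Pu Pv Pz)
    {e : Sym2 V} (he : e ∈ A₁.edges) :
    ∃ s, s ≠ (A₁.append (A₂.append A₃)).edges.toFinset ∧ IsCircleOf G s ∧ e ∈ s ∧
      esign σ s = esign σ (A₁.append (A₂.append A₃)).edges.toFinset := by
  have hA₁ : A₁.IsPath := hC.isPath_of_append_left (not_nil_of_ne huv.symm)
  have hA₁₂ : (A₁.append A₂).IsPath := by
    rw [append_assoc] at hC
    exact hC.isPath_of_append_left (not_nil_of_ne hzu)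
  have hA₃₁ : (A₃.append A₁).IsPath := by
    have h := hC.append_comm
    rw [← append_assoc] at h
    exact h.append_comm.isPath_of_append_left (not_nil_of_ne hvz)
  set C := A₁.append (A₂.append A₃)
  have hA₁D : ∀ s ∈ A₁.support, s ∉ D := fun s hs hsD => hD s hsD (by simp [C, hs])
  have hA₁₂D : ∀ s ∈ (A₁.append A₂).support, s ∉ D := fun s hs hsD => hD s hsD (by
    rw [mem_support_append_iff] at hs; simp only [C, mem_support_append_iff]; tauto)
  have hA₃₁D : ∀ s ∈ (A₃.append A₁).support, s ∉ D := fun s hs hsD => hD s hsD (by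
    rw [mem_support_append_iff] at hs; simp only [C, mem_support_append_iff]; tauto)
  have hK₁ := hA₁.isCycle_append_legs hT.isPath₂ hT.isPath₁ hT.center_mem hA₁D hT.support₂
    hT.support₁ fun s h₂ h₁ => hT.inter₁₂ s h₁ h₂
  have hK₂ := hA₁₂.isCycle_append_legs hT.isPath₃ hT.isPath₁ hT.center_mem hA₁₂D hT.support₃
    hT.support₁ fun s h₃ h₁ => hT.inter₁₃ s h₁ h₃
  have hK₃ := hA₃₁.isCycle_append_legs hT.isPath₂ hT.isPath₃ hT.center_mem hA₃₁D hT.support₂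
    hT.support₃ hT.inter₂₃
  have hsign : wsign σ (A₁.append (Pv.reverse.append Pu)) *
      wsign σ ((A₁.append A₂).append (Pz.reverse.append Pu)) *
      wsign σ ((A₃.append A₁).append (Pv.reverse.append Pz)) = esign σ C.edges.toFinset := by
    rw [hC.isTrail.esign_edges_toFinset]
    simp only [C, wsign_append, wsign_reverse]
    exact Int.units_three_circle_signs _ _ _ _ _ _
  have hcC : c ∉ C.support := hD c hT.center_mem
  rcases Int.units_eq_of_mul_mul_eq hsign with h | h | h
  · exact hK₁.exists_isCircleOf_ne (by simp) hcC (by simp [he]) h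
  · exact hK₂.exists_isCircleOf_ne (by simp) hcC (by simp [he]) h
  · exact hK₃.exists_isCircleOf_ne (by simp) hcC (by simp [he]) h

end Walk

end SimpleGraph

section

omit [DecidableEq V]

lemma attachments_singleton_ncard_le {G : SimpleGraph V} {a : V} (w : G.Walk a a) (x y : V) :
    (attachments G w {s(x, y)}).ncard ≤ 2 := by
  have hsub : attachments G w {s(x, y)} ⊆ {x, y} := by
    rintro t ⟨-, f, rfl, htf⟩
    exact Sym2.mem_iff.mp htf
  calc _ ≤ ({x, y} : Set V).ncard := Set.ncard_le_ncard hsub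
    _ ≤ ({y} : Set V).ncard + 1 := Set.ncard_insert_le x {y}
    _ = 2 := by rw [Set.ncard_singleton]

lemma adj_of_mem_attachments {G : SimpleGraph V} {a : V} {w : G.Walk a a} {D : Set V}
    (hDw : ∀ x ∈ D, x ∉ w.support) {t : V}
    (ht : t ∈ attachments G w {f | f ∈ G.edgeSet ∧ ∃ x ∈ D, x ∈ f}) :
    t ∉ D ∧ ∃ d ∈ D, G.Adj t d := by
  obtain ⟨htw, f, ⟨hfG, d, hdD, hdf⟩, htf⟩ := ht
  have htD : t ∉ D := fun h => hDw t h htw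
  refine ⟨htD, d, hdD, ?_⟩
  rwa [(Sym2.mem_and_mem_iff fun h : t = d => htD (h ▸ hdD)).mp ⟨htf, hdf⟩] at hfG

end

theorem bridge_three_attachments_not_battery_general {V : Type*} [DecidableEq V]
    (G : SimpleGraph V) (σ : Sym2 V → ℤˣ)
    {a : V} (w : G.Walk a a) (hw : w.IsCycle)
    (e : Sym2 V) (he : e ∈ w.edges)
    (F : Set (Sym2 V)) (hF : IsBridgeOf G w F)
    (hatt : 3 ≤ (attachments G w F).ncard) :
    ∃ s₁ s₂ : Finset (Sym2 V), s₁ ≠ s₂ ∧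
      (IsCircleOf G s₁ ∧ e ∈ s₁ ∧ esign σ s₁ = esign σ w.edges.toFinset) ∧
      (IsCircleOf G s₂ ∧ e ∈ s₂ ∧ esign σ s₂ = esign σ w.edges.toFinset) := by
  obtain ⟨D, -, hDw, hD, -, rfl⟩ := hF.resolve_left fun ⟨x, y, _, _, _, _, _, hF⟩ => by
    have := attachments_singleton_ncard_le w x y
    rw [← hF] at this
    omega
  have hattD := fun t ht => adj_of_mem_attachments hDw (t := t) ht
  obtain ⟨x, hx, y, hy, t, ht, hxy, hyt, htx, A₁, A₂, A₃, hC, hCw, heA⟩ :=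
    hw.exists_three_arcs_of_mem_edges he (fun _ h => h.1) hatt
  obtain ⟨c, P₁, P₂, P₃, hT⟩ := exists_isTripod hD (hattD x hx).1 (hattD y hy).1 (hattD t ht).1
    hxy hyt htx (hattD x hx).2 (hattD y hy).2 (hattD t ht).2
  have hDC : ∀ s ∈ D, s ∉ (A₁.append (A₂.append A₃)).support :=
    fun s hs hsC => hDw s hs (Walk.mem_support_of_edges_toFinset_eq hC.not_nil hCw hsC)
  obtain ⟨s, hsC, hs⟩ := hC.exists_isCircleOf_of_isTripod σ hxy hyt htx hDC hT heA
  rw [hCw] at hsC hs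
  exact ⟨_, s, Ne.symm hsC, ⟨⟨a, w, hw, rfl⟩, List.mem_toFinset.mpr he, rfl⟩, hs⟩

theorem bridge_three_attachments_not_battery {V : Type*} [DecidableEq V]
    (G : SimpleGraph V) (σ : Sym2 V → ℤˣ) (hG : IsBlock G)
    {a : V} (w : G.Walk a a) (hw : w.IsCycle)
    (e : Sym2 V) (he : e ∈ w.edges)
    (F : Set (Sym2 V)) (hF : IsBridgeOf G w F)
    (hatt : 3 ≤ (attachments G w F).ncard) :
    ∃ s₁ s₂ : Finset (Sym2 V), s₁ ≠ s₂ ∧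
      (IsCircleOf G s₁ ∧ e ∈ s₁ ∧ esign σ s₁ = esign σ w.edges.toFinset) ∧
      (IsCircleOf G s₂ ∧ e ∈ s₂ ∧ esign σ s₂ = esign σ w.edges.toFinset) :=
  bridge_three_attachments_not_battery_general G σ w hw e he F hF hatt
end
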